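/- Fix i ∈ ℤ and n ≥ 2. Let x₁,…,xₙ and y₁,…,yₙ be configurations with x_k ⪯ y_k for every k ∈ {1,…,n}. Then for every integer l ≥ i, Dⁿ_{i,0}(x₁,…,xₙ)[i,l] ≤ Dⁿ_{i,0}(y₁,…,yₙ)[i,l]; that is, the map (x₁,…,xₙ) ↦ Dⁿ_{i,0}(x₁,…,xₙ)[i,l] is nondecreasing in each of its arguments. -/

import Mathlib

open scoped BigOperators

/-- A particle configuration on `ℤ`: a `{0,1}`-valued function. -/
abbrev Config := ℤ → ℤ

/-- `x` takes only the values `0` and `1`. -/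
def IsConfig (x : Config) : Prop := ∀ i, x i = 0 ∨ x i = 1

/-- `x[i,j] = ∑_{k=i}^j x(k)` (zero if `j < i`). -/
noncomputable def cnt (x : Config) (i j : ℤ) : ℤ := ∑ k ∈ Finset.Icc i j, x k

/-- `(a,s)` has finite queue lengths. -/
def FinQ (a s : Config) : Prop :=
  ∀ i : ℤ, BddAbove {v : ℤ | ∃ j ≤ i, v = cnt a j i - cnt s j i}

/-- The queue length `Q_i(a,s) = sup_{j ≤ i} max(a[j,i] - s[j,i], 0)`. -/
noncomputable def queue (a s : Config) (i : ℤ) : ℤ :=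
  sSup {q : ℤ | ∃ j ≤ i, q = max (cnt a j i - cnt s j i) 0}

/-- The departure configuration `D(a,s)`. -/
noncomputable def dep (a s : Config) : Config := fun i =>
  if s i = 1 ∧ (0 < queue a s (i - 1) ∨ a i = 1) then 1 else 0

/-- The unused-service configuration `U(a,s)`. -/
noncomputable def unusedSrv (a s : Config) : Config := fun i =>
  if s i = 1 ∧ queue a s (i - 1) = 0 ∧ a i = 0 then 1 else 0

/-- `R(a,s)(i) = a(i) + U(a,s)(i)`. -/
noncomputable def Rmap (a s : Config) : Config := fun i => a i + unusedSrv a s i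

/-- Truncation: `x_{n,0}(i) = x(i)` for `i ≥ n`, `0` otherwise. -/
def trunc (x : Config) (n : ℤ) : Config := fun i => if n ≤ i then x i else 0

/-- Left-peeling tandem queue: `Dtandem x [s₁,…,s_k] = D(…D(D(x,s₁),s₂)…,s_k)`. -/
noncomputable def Dtandem : Config → List Config → Config
  | x, [] => x
  | x, s :: rest => Dtandem (dep x s) rest

/-- `DtandemList [x₁,…,xₙ] = Dⁿ(x₁,…,xₙ)`. -/
noncomputable def DtandemList : List Config → Config
  | [] => fun _ => 0
  | x :: rest => Dtandem x rest

/-- `DtandemN x = Dⁿ(x 0, …, x (n-1))`. -/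
noncomputable def DtandemN {n : ℕ} (x : Fin n → Config) : Config :=
  DtandemList (List.ofFn x)

/-- Every pair appearing as (arrivals, services) in the recursive definition of the
tandem departure map has finite queue lengths. -/
def TandemFinQ : List Config → Prop
  | [] => True
  | [_] => True
  | x :: s :: rest => FinQ x s ∧ TandemFinQ (dep x s :: rest)
  termination_by l => l.length

/-!
For configurations vanishing before `i`, the queue length is a finite maximum,
`Q_l(a,s) = max_{i ≤ j ≤ l+1} (a[j,l] - s[j,l])`, and it obeys Lindley's recursion
`Q_{l+1} = max(Q_l + a(l+1) - s(l+1), 0)`. Together with the departure rule this gives the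
conservation law `D(a,s)[i,l] = a[i,l] - Q_l`, hence
`D(a,s)[i,l] = min_{i ≤ j ≤ l+1} (a[i,j-1] + s[j,l])`,
which is nondecreasing in the cumulative arrival counts `a[i,·]` and in `s`. Since `D(a,s)` is
again a configuration vanishing before `i`, this propagates along the tandem.
-/

def VanishesBelow (i : ℤ) (x : Config) : Prop := ∀ m < i, x m = 0

lemma cnt_of_lt (x : Config) {j l : ℤ} (h : l < j) : cnt x j l = 0 := by
  simp [cnt, Finset.Icc_eq_empty_of_lt h]

lemma cnt_self (x : Config) (j : ℤ) : cnt x j j = x j := by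
  simp [cnt]

lemma cnt_add_cnt (x : Config) {i j l : ℤ} (hij : i ≤ j) (hjl : j ≤ l + 1) :
    cnt x i (j - 1) + cnt x j l = cnt x i l := by
  unfold cnt
  rw [← Finset.sum_union (Finset.disjoint_left.2 fun k hk hk' => by
    simp only [Finset.mem_Icc] at hk hk'; omega)]
  congr 1
  ext k
  simp only [Finset.mem_union, Finset.mem_Icc]
  omega

lemma cnt_succ (x : Config) {i l : ℤ} (h : i ≤ l + 1) :
    cnt x i (l + 1) = cnt x i l + x (l + 1) := by
  rw [← cnt_add_cnt x (j := l + 1) h (by omega), add_sub_cancel_right, cnt_self]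

lemma cnt_mono {x y : Config} (h : x ≤ y) (i l : ℤ) : cnt x i l ≤ cnt y i l :=
  Finset.sum_le_sum fun k _ => h k

lemma VanishesBelow.cnt_eq {i j : ℤ} {x : Config} (hx : VanishesBelow i x) (hj : j ≤ i)
    (l : ℤ) : cnt x j l = cnt x i l :=
  (Finset.sum_subset (Finset.Icc_subset_Icc_left hj) fun k hk hk' => hx k (by
    simp only [Finset.mem_Icc] at hk hk'; omega)).symm

lemma VanishesBelow.dep {i : ℤ} {s : Config} (hs : VanishesBelow i s) (a : Config) :
    VanishesBelow i (dep a s) := fun m hm => by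
  simp [_root_.dep, hs m hm]

lemma IsConfig.dep (a s : Config) : IsConfig (dep a s) := fun m => by
  unfold _root_.dep
  split_ifs <;> simp

lemma IsConfig.trunc {x : Config} (hx : IsConfig x) (i : ℤ) : IsConfig (trunc x i) := fun m => by
  unfold _root_.trunc
  split_ifs
  exacts [hx m, Or.inl rfl]

lemma vanishesBelow_trunc (x : Config) (i : ℤ) : VanishesBelow i (trunc x i) := fun m hm => by
  simp [trunc, not_le.2 hm]

lemma trunc_mono {x y : Config} (h : x ≤ y) (i : ℤ) : trunc x i ≤ trunc y i := fun m => by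
  unfold trunc
  split_ifs
  exacts [h m, le_rfl]

section Queue

variable {i : ℤ} {a s : Config} (ha : VanishesBelow i a) (hs : VanishesBelow i s)
include ha hs

theorem queue_eq_sup' {l : ℤ} (hl : i ≤ l + 1) :
    queue a s l = (Finset.Icc i (l + 1)).sup' (Finset.nonempty_Icc.2 hl)
      fun j => cnt a j l - cnt s j l := by
  set M := (Finset.Icc i (l + 1)).sup' (Finset.nonempty_Icc.2 hl) fun j => cnt a j l - cnt s j l
  have le_M {j : ℤ} (hij : i ≤ j) (hjl : j ≤ l + 1) : cnt a j l - cnt s j l ≤ M :=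
    Finset.le_sup' (fun j => cnt a j l - cnt s j l) (Finset.mem_Icc.2 ⟨hij, hjl⟩)
  have hM : 0 ≤ M := by simpa [cnt_of_lt] using le_M hl le_rfl
  refine IsGreatest.csSup_eq ⟨?_, ?_⟩
  · obtain ⟨j, hj, hMj⟩ : ∃ j ∈ Finset.Icc i (l + 1), M = cnt a j l - cnt s j l :=
      Finset.exists_mem_eq_sup' _ _
    rw [Finset.mem_Icc] at hj
    rcases hj.2.lt_or_eq with hjl | rfl
    · exact ⟨j, by omega, by omega⟩
    -- here `M = 0` comes from the empty window `j = l + 1`; the window `j = i - 1` also gives `0`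
    refine ⟨i - 1, by omega, ?_⟩
    rw [ha.cnt_eq (by omega), hs.cnt_eq (by omega)]
    have := le_M le_rfl hl
    simp only [cnt_of_lt _ (lt_add_one l), sub_zero] at hMj
    omega
  · rintro q ⟨j, hjl, rfl⟩
    refine max_le ?_ hM
    rcases le_total j i with hji | hij
    · rw [ha.cnt_eq hji, hs.cnt_eq hji]
      exact le_M le_rfl hl
    · exact le_M hij (by omega)

theorem le_queue {j l : ℤ} (hij : i ≤ j) (hjl : j ≤ l + 1) :
    cnt a j l - cnt s j l ≤ queue a s l := by
  rw [queue_eq_sup' ha hs (hij.trans hjl)]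
  exact Finset.le_sup' (fun j => cnt a j l - cnt s j l) (Finset.mem_Icc.2 ⟨hij, hjl⟩)

theorem exists_queue_eq {l : ℤ} (hl : i ≤ l + 1) :
    ∃ j, i ≤ j ∧ j ≤ l + 1 ∧ queue a s l = cnt a j l - cnt s j l := by
  obtain ⟨j, hj, h⟩ := Finset.exists_mem_eq_sup' (Finset.nonempty_Icc.2 hl)
    fun j => cnt a j l - cnt s j l
  exact ⟨j, (Finset.mem_Icc.1 hj).1, (Finset.mem_Icc.1 hj).2, (queue_eq_sup' ha hs hl).trans h⟩

theorem queue_nonneg {l : ℤ} (hl : i ≤ l + 1) : 0 ≤ queue a s l := by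
  simpa [cnt_of_lt] using le_queue ha hs hl le_rfl

theorem queue_succ {l : ℤ} (hl : i ≤ l + 1) :
    queue a s (l + 1) = max (queue a s l + (a (l + 1) - s (l + 1))) 0 := by
  rw [queue_eq_sup' ha hs hl, queue_eq_sup' ha hs (by omega : i ≤ l + 1 + 1), Finset.sup'_add,
    Finset.sup'_congr _ (Finset.insert_Icc_right_eq_Icc_add_one (by omega)).symm fun _ _ => rfl,
    Finset.sup'_insert (H := Finset.nonempty_Icc.2 hl), cnt_of_lt _ (lt_add_one _),
    cnt_of_lt _ (lt_add_one _), sub_zero, max_comm]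
  congr 1
  refine Finset.sup'_congr _ rfl fun j hj => ?_
  rw [Finset.mem_Icc] at hj
  rw [cnt_succ a hj.2, cnt_succ s hj.2]
  ring

end Queue

section Departures

variable {i : ℤ} {a s a' s' : Config}

theorem dep_succ (hac : IsConfig a) (hsc : IsConfig s) (ha : VanishesBelow i a)
    (hs : VanishesBelow i s) {l : ℤ} (hl : i ≤ l + 1) :
    dep a s (l + 1) = queue a s l + a (l + 1) - queue a s (l + 1) := by
  have hq := queue_nonneg ha hs hl
  rw [queue_succ ha hs hl, dep, add_sub_cancel_right]
  rcases hac (l + 1) with h | h <;> rcases hsc (l + 1) with h' | h' <;> simp [h, h'] <;> omega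

theorem cnt_dep (hac : IsConfig a) (hsc : IsConfig s) (ha : VanishesBelow i a)
    (hs : VanishesBelow i s) :
    ∀ l, i - 1 ≤ l → cnt (dep a s) i l = cnt a i l - queue a s l := by
  refine Int.leInduction ?_ fun l hl ih => ?_
  · rw [queue_eq_sup' ha hs (by omega)]
    simp [cnt_of_lt]
  rw [cnt_succ _ (by omega), cnt_succ _ (by omega), ih, dep_succ hac hsc ha hs (by omega)]
  ring

theorem cnt_dep_le_cnt_dep (hac : IsConfig a) (hsc : IsConfig s) (hac' : IsConfig a')
    (hsc' : IsConfig s') (ha : VanishesBelow i a) (hs : VanishesBelow i s)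
    (ha' : VanishesBelow i a') (hs' : VanishesBelow i s')
    (harr : ∀ l, cnt a i l ≤ cnt a' i l) (hsrv : s ≤ s') (l : ℤ) :
    cnt (dep a s) i l ≤ cnt (dep a' s') i l := by
  rcases lt_or_ge l i with hl | hl
  · rw [cnt_of_lt _ hl, cnt_of_lt _ hl]
  rw [cnt_dep hac hsc ha hs l (by omega), cnt_dep hac' hsc' ha' hs' l (by omega)]
  obtain ⟨j, hij, hjl, hq'⟩ := exists_queue_eq ha' hs' (l := l) (by omega)
  calc cnt a i l - queue a s l
      ≤ cnt a i l - (cnt a j l - cnt s j l) := by linarith [le_queue ha hs hij hjl]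
    _ = cnt a i (j - 1) + cnt s j l := by rw [← cnt_add_cnt a hij hjl]; ring
    _ ≤ cnt a' i (j - 1) + cnt s' j l := add_le_add (harr _) (cnt_mono hsrv j l)
    _ = cnt a' i l - queue a' s' l := by rw [hq', ← cnt_add_cnt a' hij hjl]; ring

theorem cnt_dtandem_le_cnt_dtandem {m : ℕ} (f g : Fin m → Config) (hf : ∀ k, IsConfig (f k))
    (hg : ∀ k, IsConfig (g k)) (hfv : ∀ k, VanishesBelow i (f k))
    (hgv : ∀ k, VanishesBelow i (g k)) (hfg : ∀ k, f k ≤ g k)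
    (hac : IsConfig a) (hac' : IsConfig a') (ha : VanishesBelow i a) (ha' : VanishesBelow i a')
    (harr : ∀ l, cnt a i l ≤ cnt a' i l) (l : ℤ) :
    cnt (Dtandem a (List.ofFn f)) i l ≤ cnt (Dtandem a' (List.ofFn g)) i l := by
  induction m generalizing a a' with
  | zero => simpa [Dtandem] using harr l
  | succ m ih =>
    simp only [List.ofFn_succ, Dtandem]
    exact ih (fun k => f k.succ) (fun k => g k.succ) (fun k => hf k.succ) (fun k => hg k.succ)
      (fun k => hfv k.succ) (fun k => hgv k.succ) (fun k => hfg k.succ) (.dep _ _) (.dep _ _)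
      ((hfv 0).dep a) ((hgv 0).dep a')
      (cnt_dep_le_cnt_dep hac (hf 0) hac' (hg 0) ha (hfv 0) ha' (hgv 0) harr (hfg 0))

end Departures

theorem stmt5_general (i : ℤ) (n : ℕ) (x y : Fin n → Config)
    (hx : ∀ k, IsConfig (x k)) (hy : ∀ k, IsConfig (y k))
    (hxy : ∀ k, ∀ m : ℤ, x k m ≤ y k m) :
    ∀ l : ℤ, i ≤ l →
      cnt (DtandemN fun k => trunc (x k) i) i l
        ≤ cnt (DtandemN fun k => trunc (y k) i) i l := by
  intro l _
  cases n with
  | zero => exact le_rfl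
  | succ n =>
    simp only [DtandemN, List.ofFn_succ, DtandemList]
    exact cnt_dtandem_le_cnt_dtandem _ _ (fun k => (hx _).trunc i) (fun k => (hy _).trunc i)
      (fun k => vanishesBelow_trunc _ i) (fun k => vanishesBelow_trunc _ i)
      (fun k => trunc_mono (hxy _) i) ((hx 0).trunc i) ((hy 0).trunc i)
      (vanishesBelow_trunc _ i) (vanishesBelow_trunc _ i)
      (cnt_mono (trunc_mono (hxy 0) i) i) l

/-- The truncated tandem departure count
`(x₁,…,xₙ) ↦ Dⁿ_{i,0}(x₁,…,xₙ)[i,l]` is nondecreasing in each of its arguments. -/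
theorem stmt5 (i : ℤ) (n : ℕ) (hn : 2 ≤ n) (x y : Fin n → Config)
    (hx : ∀ k, IsConfig (x k)) (hy : ∀ k, IsConfig (y k))
    (hxy : ∀ k, ∀ m : ℤ, x k m ≤ y k m) :
    ∀ l : ℤ, i ≤ l →
      cnt (DtandemN fun k => trunc (x k) i) i l
        ≤ cnt (DtandemN fun k => trunc (y k) i) i l :=
  stmt5_general i n x y hx hy hxy
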